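/- Let P ⊆ S² be a finite set contained in a hemisphere (there exists an enclosing spherical circle of radius < π/2). Then the smallest enclosing spherical circle of P is unique: if (c₁, r) and (c₂, r) are both centers/radius of smallest enclosing spherical circles with r < π/2, then c₁ = c₂. -/

import Mathlib

/-!
If two distinct centres `c₁ ≠ c₂` both enclose `P` with radius `r < π/2`, then every `x ∈ P`
satisfies `⟪cᵢ, x⟫ ≥ cos r > 0`, so `⟪c₁ + c₂, x⟫ ≥ 2 cos r`. By strict convexity of the unit ball
`‖c₁ + c₂‖ < 2`, hence the normalized midpoint `m` has `⟪m, x⟫ > cos r`, i.e. `arccos ⟪m, x⟫ < r`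
for all `x ∈ P`. As `P` is finite, `m` encloses `P` with a radius strictly smaller than `r`.
-/

open scoped RealInnerProductSpace
open Real

local notation "E" => EuclideanSpace ℝ (Fin 3)

namespace Real

theorem cos_le_of_arccos_le {r t : ℝ} (hr : r < π) (h : arccos t ≤ r) : cos r ≤ t := by
  by_cases ht₁ : 1 < t
  · linarith [cos_le_one r]
  have ht₀ : -1 ≤ t := by
    by_contra! ht
    rw [arccos_of_le_neg_one ht.le] at h
    linarith
  calc cos r ≤ cos (arccos t) := cos_le_cos_of_nonneg_of_le_pi (arccos_nonneg t) hr.le h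
    _ = t := cos_arccos ht₀ (not_lt.1 ht₁)

theorem arccos_lt_of_cos_lt {r t : ℝ} (hr₀ : 0 ≤ r) (hr : r ≤ π) (ht : t ≤ 1) (h : cos r < t) :
    arccos t < r := by
  simpa only [arccos_cos hr₀ hr] using arccos_lt_arccos (neg_one_le_cos r) h ht

end Real

theorem NormedSpace.norm_normalize_le_one {V : Type*} [NormedAddCommGroup V] [NormedSpace ℝ V]
    (v : V) : ‖NormedSpace.normalize v‖ ≤ 1 := by
  by_cases hv : v = 0
  · simp [hv]
  · exact (NormedSpace.norm_normalize hv).le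

section InnerProductSpace

variable {F : Type*} [NormedAddCommGroup F] [InnerProductSpace ℝ F]

theorem lt_inner_normalize_add {c₁ c₂ x : F} {k : ℝ} (hc₁ : ‖c₁‖ = 1) (hc₂ : ‖c₂‖ = 1)
    (hne : c₁ ≠ c₂) (hk : 0 < k) (h₁ : k ≤ ⟪c₁, x⟫) (h₂ : k ≤ ⟪c₂, x⟫) :
    k < ⟪NormedSpace.normalize (c₁ + c₂), x⟫ := by
  have hsum : 2 * k ≤ ⟪c₁ + c₂, x⟫ := by rw [inner_add_left]; linarith
  have hpos : 0 < ‖c₁ + c₂‖ := by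
    refine norm_pos_iff.2 fun h ↦ ?_
    rw [h, inner_zero_left] at hsum
    linarith
  have hlt : ‖c₁ + c₂‖ < 2 := by
    have := norm_add_lt_of_not_sameRay ((sameRay_iff_of_norm_eq (hc₁.trans hc₂.symm)).not.2 hne)
    rwa [hc₁, hc₂, one_add_one_eq_two] at this
  rw [NormedSpace.normalize, real_inner_smul_left, lt_inv_mul_iff₀ hpos]
  calc ‖c₁ + c₂‖ * k < 2 * k := by gcongr
    _ ≤ ⟪c₁ + c₂, x⟫ := hsum

theorem arccos_inner_normalize_add_lt {c₁ c₂ x : F} {r : ℝ} (hc₁ : ‖c₁‖ = 1) (hc₂ : ‖c₂‖ = 1)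
    (hx : ‖x‖ = 1) (hne : c₁ ≠ c₂) (hr : r < π / 2)
    (h₁ : arccos ⟪c₁, x⟫ ≤ r) (h₂ : arccos ⟪c₂, x⟫ ≤ r) :
    arccos ⟪NormedSpace.normalize (c₁ + c₂), x⟫ < r := by
  have hr₀ : 0 ≤ r := (arccos_nonneg _).trans h₁
  have hrπ : r < π := by linarith [pi_pos]
  have hcos : 0 < cos r := cos_pos_of_mem_Ioo ⟨by linarith [pi_pos], hr⟩
  have hle : ⟪NormedSpace.normalize (c₁ + c₂), x⟫ ≤ 1 :=
    (real_inner_le_norm _ _).trans <| by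
      simpa [hx] using NormedSpace.norm_normalize_le_one (c₁ + c₂)
  exact arccos_lt_of_cos_lt hr₀ hrπ.le hle <| lt_inner_normalize_add hc₁ hc₂ hne hcos
    (cos_le_of_arccos_le hrπ h₁) (cos_le_of_arccos_le hrπ h₂)

end InnerProductSpace

theorem smallest_enclosing_circle_unique (P : Finset E) (hP : P.Nonempty)
    (hsphere : ∀ x ∈ P, ‖x‖ = 1)
    (c₁ c₂ : E) (hc₁ : ‖c₁‖ = 1) (hc₂ : ‖c₂‖ = 1) (r : ℝ) (hr : r < π / 2)
    (h₁ : ∀ x ∈ P, Real.arccos ⟪c₁, x⟫ ≤ r)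
    (h₂ : ∀ x ∈ P, Real.arccos ⟪c₂, x⟫ ≤ r)
    (hmin : ∀ (c' : E) (r' : ℝ), ‖c'‖ = 1 →
      (∀ x ∈ P, Real.arccos ⟪c', x⟫ ≤ r') → r ≤ r') :
    c₁ = c₂ := by
  by_contra hne
  set m := NormedSpace.normalize (c₁ + c₂)
  have hcloser : ∀ x ∈ P, arccos ⟪m, x⟫ < r := fun x hx ↦
    arccos_inner_normalize_add_lt hc₁ hc₂ (hsphere x hx) hne hr (h₁ x hx) (h₂ x hx)
  obtain ⟨x₀, hx₀⟩ := hP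
  have hm : ‖m‖ = 1 := by
    refine NormedSpace.norm_normalize fun h ↦ ?_
    have := hcloser x₀ hx₀
    simp only [m, h, NormedSpace.normalize_zero_eq_zero, inner_zero_left, arccos_zero] at this
    linarith
  have hmax := (P.sup'_lt_iff ⟨x₀, hx₀⟩).2 hcloser
  exact hmax.not_ge (hmin m _ hm fun x hx ↦ P.le_sup' (fun x ↦ arccos ⟪m, x⟫) hx)
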